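/- arXiv:1910.03146 — 3 statements merged into one kernel-verified Lean document; each statement's English description precedes it below -/
import Mathlib

section
/- With K = k((x)), L/K the Artin–Schreier extension given by y^p - y = x^{-m} g(x) with g a unit power series, m coprime to p and m ≡ -1 (mod p), write m + 1 = pn. Then z := x^n y satisfies the integral equation z^p - z·x^{n(p-1)} = x·g(x), and z has valuation 1 in L (i.e., z is a uniformizer of the valuation ring of L). -/
/-- with L/K the Artin–Schreier extension y^p - y = x^{-m} g(x),
g a unit power series (w g = 0), m coprime to p and m ≡ -1 (mod p), m + 1 = p n,
z := x^n y satisfies z^p - z x^{n(p-1)} = x g(x) and w z = 1 (z is a uniformizer). -/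
theorem stmt_1 {p m n : ℕ} (hp : p.Prime) (hm : 0 < m) (hcop : Nat.Coprime m p)
    (hmp : (m : ZMod p) = -1) (hn : m + 1 = p * n)
    {L : Type*} [Field L] [CharP L p]
    (w : L → ℤ)
    (hmul : ∀ a b : L, a ≠ 0 → b ≠ 0 → w (a * b) = w a + w b)
    (hadd : ∀ a b : L, a ≠ 0 → b ≠ 0 → a + b ≠ 0 → min (w a) (w b) ≤ w (a + b))
    (hadd' : ∀ a b : L, a ≠ 0 → b ≠ 0 → a + b ≠ 0 → w a ≠ w b →
      w (a + b) = min (w a) (w b))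
    (x y g : L) (hx : x ≠ 0) (hy : y ≠ 0) (hg : g ≠ 0)
    (hwx : w x = (p : ℤ)) (hwg : w g = 0)
    (heq : y ^ p - y = x ^ (-(m : ℤ)) * g) :
    (x ^ n * y) ^ p - (x ^ n * y) * x ^ (n * (p - 1)) = x * g ∧
      w (x ^ n * y) = 1 := by
  have hp2 : 2 ≤ p := hp.two_le
  have hp1 : (1:ℤ) < p := by exact_mod_cast hp.one_lt
  have hw1 : w 1 = 0 := by
    have h := hmul 1 1 one_ne_zero one_ne_zero
    rw [mul_one] at h
    linarith
  have hwneg : ∀ a : L, a ≠ 0 → w (-a) = w a := by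
    intro a ha
    have h1 : w ((-1 : L) * (-1)) = w (-1) + w (-1) := hmul _ _ (by norm_num) (by norm_num)
    rw [neg_mul_neg, one_mul, hw1] at h1
    have hneg1 : w (-1 : L) = 0 := by linarith
    have h2 := hmul (-1) a (by norm_num) ha
    rw [neg_one_mul, hneg1, zero_add] at h2
    exact h2
  have hwpow : ∀ a : L, a ≠ 0 → ∀ k : ℕ, w (a ^ k) = k * w a := by
    intro a ha k
    induction k with
    | zero => simpa using hw1
    | succ k ih =>
      have h := hmul (a ^ k) a (pow_ne_zero _ ha) ha
      rw [← pow_succ] at h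
      rw [h, ih]
      push_cast
      ring
  have hwinv : ∀ a : L, a ≠ 0 → w a⁻¹ = - w a := by
    intro a ha
    have h := hmul a a⁻¹ ha (inv_ne_zero ha)
    rw [mul_inv_cancel₀ ha, hw1] at h
    linarith
  have hxm : (x : L) ^ (-(m:ℤ)) = (x ^ m)⁻¹ := by
    rw [zpow_neg, zpow_natCast]
  have hxmne : x ^ (-(m:ℤ)) ≠ 0 := by
    rw [hxm]; exact inv_ne_zero (pow_ne_zero _ hx)
  have hrhsne : x ^ (-(m:ℤ)) * g ≠ 0 := mul_ne_zero hxmne hg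
  have hwrhs : w (x ^ (-(m:ℤ)) * g) = -((m:ℤ) * p) := by
    rw [hmul _ _ hxmne hg, hwg, hxm, hwinv _ (pow_ne_zero _ hx), hwpow _ hx, hwx]
    ring
  have hsum : y ^ p + (-y) ≠ 0 := by
    rw [← sub_eq_add_neg, heq]; exact hrhsne
  have hypne : y ^ p ≠ 0 := pow_ne_zero _ hy
  have hwyp : w (y ^ p) = p * w y := hwpow y hy p
  have hmppos : (0:ℤ) < (m:ℤ) * p := by positivity
  have hvneg : w y < 0 := by
    by_contra h
    push_neg at h
    have hmin := hadd _ _ hypne (neg_ne_zero.mpr hy) hsum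
    rw [hwneg _ hy, hwyp, ← sub_eq_add_neg, heq, hwrhs] at hmin
    have h1 : (0:ℤ) ≤ min ((p:ℤ) * w y) (w y) := le_min (by nlinarith) h
    linarith
  have hne : w (y ^ p) ≠ w (-y) := by
    rw [hwyp, hwneg _ hy]
    intro hcontra
    have h1 : ((p:ℤ) - 1) * w y = 0 := by linarith
    rcases mul_eq_zero.mp h1 with h2 | h2
    · linarith
    · linarith
  have hwsum : w (y ^ p - y) = (p:ℤ) * w y := by
    have h := hadd' (y ^ p) (-y) hypne (neg_ne_zero.mpr hy) hsum hne
    rw [← sub_eq_add_neg] at h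
    rw [h, hwyp, hwneg _ hy]
    exact min_eq_left (by nlinarith)
  have hwy : w y = -(m:ℤ) := by
    have h1 : (p:ℤ) * w y = -((m:ℤ) * p) := by rw [← hwsum, heq, hwrhs]
    have hp0 : (p:ℤ) ≠ 0 := by linarith
    have h2 : (p:ℤ) * w y = (p:ℤ) * (-(m:ℤ)) := by linarith
    exact mul_left_cancel₀ hp0 h2
  have hnp : n * p = m + 1 := by rw [hn, Nat.mul_comm]
  constructor
  · have e1 : (x ^ n * y) ^ p = x ^ (n * p) * y ^ p := by rw [mul_pow, ← pow_mul]
    have e2 : x ^ n * y * x ^ (n * (p - 1)) = x ^ (n * p) * y := by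
      rw [mul_right_comm, ← pow_add]
      congr 2
      obtain ⟨q, hq⟩ : ∃ q, p = q + 1 := ⟨p - 1, by omega⟩
      subst hq
      simp [Nat.add_sub_cancel, Nat.mul_add]
      omega
    rw [e1, e2, ← mul_sub, heq, ← mul_assoc]
    congr 1
    rw [← zpow_natCast x (n * p), ← zpow_add₀ hx]
    have h3 : ((n * p : ℕ) : ℤ) + (-(m:ℤ)) = 1 := by
      push_cast
      omega
    rw [h3, zpow_one]
  · rw [hmul _ _ (pow_ne_zero _ hx) hy, hwpow _ hx, hwx, hwy]
    have h4 : ((n * p : ℕ) : ℤ) = (m:ℤ) + 1 := by exact_mod_cast hnp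
    push_cast at h4 ⊢
    linarith
end

section
/- Let K = k((x)) with A = k[[x]], and let L/K be the Artin–Schreier extension y^p - y = x^{-m}g(x) with g ∈ A^×, gcd(m,p)=1, and m ≡ -1 (mod p); write m + 1 = pn. Then the integral closure B of A in L equals A[z] where z = x^n y. -/
open scoped LaurentSeries
open Polynomial

lemma aux_minpoly_deg {K L : Type*} [Field K] [Field L] [Algebra K L]
    {y : L} (hy : IsIntegral K y) (hgen : Algebra.adjoin K {y} = ⊤) :
    (minpoly K y).natDegree = Module.finrank K L := by
  let PB : PowerBasis K L := (Algebra.adjoin.powerBasis hy).map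
    ((Subalgebra.equivOfEq _ _ hgen).trans Subalgebra.topEquiv)
  have h1 : PB.dim = (minpoly K y).natDegree := rfl
  have := PB.finrank
  omega

lemma aux_minpoly_eq {K L : Type*} [Field K] [Field L] [Algebra K L]
    {y : L} (hgen : Algebra.adjoin K {y} = ⊤) {P : K[X]} (hP : P.Monic)
    (h0 : aeval y P = 0) (hPdeg : P.natDegree = Module.finrank K L) :
    minpoly K y = P := by
  have hy : IsIntegral K y := ⟨P, hP, h0⟩
  exact (Polynomial.eq_of_monic_of_dvd_of_natDegree_le (minpoly.monic hy) hP
    (minpoly.dvd K y h0) (by rw [hPdeg, ← aux_minpoly_deg hy hgen])).symm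

lemma aux_sep {p : ℕ} (hp : p.Prime) {K L : Type*} [Field K] [Field L] [CharP K p]
    [Algebra K L] [FiniteDimensional K L] (hdeg : Module.finrank K L = p)
    (c : K) {y : L} (heq : y ^ p - y = algebraMap K L c)
    (hgen : Algebra.adjoin K {y} = ⊤) : Algebra.IsSeparable K L := by
  have hp2 : 1 < p := hp.one_lt
  set P : K[X] := X ^ p - X - C c with hPdef
  have hP1' : P = X ^ p - (C 1 * X + C c) := by rw [hPdef, map_one]; ring
  have hPm : P.Monic := by
    rw [hP1']
    exact monic_X_pow_sub (lt_of_le_of_lt degree_linear_le (by exact_mod_cast hp2))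
  have hPdeg : P.natDegree = p := by
    rw [hP1', natDegree_sub_eq_left_of_natDegree_lt, natDegree_X_pow]
    rw [natDegree_X_pow]
    exact lt_of_le_of_lt natDegree_linear_le hp2
  have h0 : aeval y P = 0 := by
    rw [hPdef]
    simp only [map_sub, aeval_X_pow, aeval_X, aeval_C]
    rw [heq, sub_self]
  have hmin : minpoly K y = P := aux_minpoly_eq hgen hPm h0 (by rw [hPdeg, hdeg])
  have hsepP : P.Separable := by
    rw [Polynomial.separable_def]
    have hder : derivative P = -1 := by
      simp [hPdef, derivative_X_pow, CharP.cast_eq_zero K p]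
    rw [hder]
    exact (isCoprime_one_right).neg_right
  have hsepy : IsSeparable K y := by rw [IsSeparable, hmin]; exact hsepP
  have htop : IntermediateField.adjoin K {y} = ⊤ := by
    apply IntermediateField.toSubalgebra_injective
    rw [IntermediateField.top_toSubalgebra]
    exact le_antisymm le_top (hgen ▸ IntermediateField.algebra_adjoin_le_adjoin K {y})
  have h1 : Algebra.IsSeparable K (IntermediateField.adjoin K {y}) :=
    (IntermediateField.isSeparable_adjoin_simple_iff_isSeparable K L).2 hsepy
  exact AlgEquiv.Algebra.isSeparable
    ((IntermediateField.equivOfEq htop).trans IntermediateField.topEquiv)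

lemma aux_adjoin_unit_mul {K L : Type*} [Field K] [Field L] [Algebra K L]
    {u : K} (hu : u ≠ 0) (y : L) :
    Algebra.adjoin K {algebraMap K L u * y} = Algebra.adjoin K {y} := by
  apply le_antisymm <;> refine Algebra.adjoin_le (Set.singleton_subset_iff.2 ?_)
  · exact mul_mem (Subalgebra.algebraMap_mem _ u)
      (Algebra.self_mem_adjoin_singleton K y)
  · have h2 : y = algebraMap K L u⁻¹ * (algebraMap K L u * y) := by
      rw [← mul_assoc, ← map_mul, inv_mul_cancel₀ hu, map_one, one_mul]
    have h3 : algebraMap K L u⁻¹ * (algebraMap K L u * y) ∈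
        Algebra.adjoin K {algebraMap K L u * y} :=
      mul_mem (Subalgebra.algebraMap_mem _ _)
        (Algebra.self_mem_adjoin_singleton K _)
    rwa [← h2] at h3

lemma aux_denom {R K L : Type*} [CommRing R] [Field K] [Field L] [Algebra R K]
    [Algebra K L] [Algebra R L] [IsScalarTower R K L] (M : Submonoid R)
    [IsLocalization M K] (PB : PowerBasis K L) (w : L) :
    ∃ r ∈ M, r • w ∈ Algebra.adjoin R {PB.gen} := by
  obtain ⟨d, hd⟩ := IsLocalization.exist_integer_multiples_of_finite M
    (fun i => PB.basis.repr w i)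
  refine ⟨d, d.2, ?_⟩
  have hw := PB.basis.sum_repr w
  rw [← hw, Finset.smul_sum]
  refine Subalgebra.sum_mem _ fun i _ => ?_
  obtain ⟨e, he⟩ := hd i
  rw [PB.basis_eq_pow, ← smul_assoc]
  have he' : (d : R) • PB.basis.repr w i = algebraMap R K e := he.symm
  rw [he', algebraMap_smul]
  exact Subalgebra.smul_mem _
    (Subalgebra.pow_mem _ (Algebra.self_mem_adjoin_singleton R PB.gen) i) e

lemma aux_monic {R : Type*} [CommRing R] (a b : R) {p : ℕ} (hp2 : 1 < p) :
    (X ^ p - C a * X - C b).Monic := by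
  have h : (X ^ p - C a * X - C b : R[X]) = X ^ p - (C a * X + C b) := by ring
  rw [h]
  exact monic_X_pow_sub (lt_of_le_of_lt degree_linear_le (by exact_mod_cast hp2))

lemma aux_natDegree {R : Type*} [CommRing R] [Nontrivial R] (a b : R) {p : ℕ} (hp2 : 1 < p) :
    (X ^ p - C a * X - C b).natDegree = p := by
  have h : (X ^ p - C a * X - C b : R[X]) = X ^ p - (C a * X + C b) := by ring
  rw [h, natDegree_sub_eq_left_of_natDegree_lt, natDegree_X_pow]
  rw [natDegree_X_pow]
  exact lt_of_le_of_lt natDegree_linear_le hp2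

lemma aux_eisenstein {R : Type*} [CommRing R] [IsDomain R] {π g : R} (hπ : Prime π)
    (hg : IsUnit g) {p j : ℕ} (hp2 : 1 < p) (hj : 0 < j) :
    (X ^ p - C (π ^ j) * X - C (π * g)).IsEisensteinAt (Ideal.span {π}) := by
  set E : R[X] := X ^ p - C (π ^ j) * X - C (π * g) with hEdef
  have hEm : E.Monic := aux_monic _ _ hp2
  have hEdeg : E.natDegree = p := aux_natDegree _ _ hp2
  refine hEm.isEisensteinAt_of_mem_of_notMem
    (Ideal.span_singleton_ne_top hπ.not_unit) ?_ ?_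
  · intro i hi
    rw [hEdeg] at hi
    rw [hEdef]
    simp only [coeff_sub, coeff_X_pow, coeff_C_mul, coeff_X, coeff_C]
    rw [Ideal.mem_span_singleton]
    refine dvd_sub (dvd_sub ?_ ?_) ?_
    · rw [if_neg (by omega : ¬ i = p)]
      exact dvd_zero π
    · exact Dvd.dvd.mul_right (dvd_pow_self π (by omega)) _
    · split_ifs
      exacts [dvd_mul_right π g, dvd_zero π]
  · have hc : E.coeff 0 = -(π * g) := by
      simp [hEdef, show (0:ℕ) ≠ p from by omega]
    rw [hc]
    intro hmem
    rw [Ideal.span_singleton_pow, neg_mem_iff, Ideal.mem_span_singleton] at hmem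
    obtain ⟨t, ht⟩ := hmem
    have hd : π ∣ g := by
      have h2 : π * g = π * (π * t) := by rw [ht]; ring
      exact Dvd.intro t (mul_left_cancel₀ hπ.ne_zero (h2.trans (by ring))).symm
    exact hπ.not_unit (isUnit_of_dvd_unit hd hg)

set_option maxHeartbeats 1000000 in
/-- K = k((x)), A = k[[x]], L/K the degree-p Artin–Schreier extension
generated by y with y^p - y = x^{-m} g(x), g ∈ A^×, gcd(m,p)=1, m ≡ -1 (mod p),
m + 1 = p n. Then the integral closure B of A in L equals A[z], z = x^n y. -/
theorem stmt_2 {p m n : ℕ} (hp : p.Prime) (hm : 0 < m) (hcop : Nat.Coprime m p)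
    (hmp : (m : ZMod p) = -1) (hn : m + 1 = p * n)
    {k : Type*} [Field k] [PerfectField k] [CharP k p]
    {L : Type*} [Field L] [Algebra (LaurentSeries k) L]
    [Algebra (PowerSeries k) L]
    [IsScalarTower (PowerSeries k) (LaurentSeries k) L]
    [FiniteDimensional (LaurentSeries k) L]
    (hdeg : Module.finrank (LaurentSeries k) L = p)
    (g : PowerSeries k) (hg : IsUnit g)
    (y : L)
    (heq : y ^ p - y =
      algebraMap (LaurentSeries k) L
        ((algebraMap (PowerSeries k) (LaurentSeries k) PowerSeries.X) ^ (-(m : ℤ)) *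
          algebraMap (PowerSeries k) (LaurentSeries k) g))
    (hgen : Algebra.adjoin (LaurentSeries k) {y} = ⊤) :
    integralClosure (PowerSeries k) L =
      Algebra.adjoin (PowerSeries k)
        {(algebraMap (PowerSeries k) L PowerSeries.X) ^ n * y} := by
  classical
  have hp2 : 1 < p := hp.one_lt
  have hn1 : 1 ≤ n := Nat.pos_of_ne_zero fun h => by simp [h] at hn
  set φ := algebraMap (PowerSeries k) (LaurentSeries k) with hφ
  set ψ := algebraMap (PowerSeries k) L with hψ
  set ι := algebraMap (LaurentSeries k) L with hι
  have hφinj : Function.Injective φ := IsFractionRing.injective _ _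
  have hφX : φ PowerSeries.X ≠ 0 :=
    fun h => PowerSeries.X_ne_zero (hφinj (h.trans (map_zero φ).symm))
  have hcomp : ∀ r, ι (φ r) = ψ r := fun r =>
    (IsScalarTower.algebraMap_apply (PowerSeries k) (LaurentSeries k) L r).symm
  set z := ψ PowerSeries.X ^ n * y with hzdef
  set c := φ PowerSeries.X ^ (-(m : ℤ)) * φ g with hcdef
  have heq' : y ^ p = y + ι c := by rw [← heq]; ring
  -- separability
  have charKf : CharP (LaurentSeries k) p :=
    charP_of_injective_algebraMap (algebraMap k (LaurentSeries k)).injective p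
  have hsep : Algebra.IsSeparable (LaurentSeries k) L := aux_sep hp hdeg c heq hgen
  -- the Eisenstein polynomial
  set a := (PowerSeries.X : PowerSeries k) ^ ((p - 1) * n) with hadef
  set b := (PowerSeries.X : PowerSeries k) * g with hbdef
  set E : Polynomial (PowerSeries k) :=
    Polynomial.X ^ p - Polynomial.C a * Polynomial.X - Polynomial.C b with hEdef
  have hEm : E.Monic := aux_monic _ _ hp2
  have hEdeg : E.natDegree = p := aux_natDegree _ _ hp2
  -- z satisfies E
  have hzp : z ^ p = ψ a * z + ψ b := by
    have h1 : z ^ p = ψ PowerSeries.X ^ (n * p) * y ^ p := by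
      rw [hzdef, mul_pow, ← pow_mul]
    have h2 : ψ PowerSeries.X ^ (n * p) * ι c = ψ b := by
      rw [show ψ PowerSeries.X = ι (φ PowerSeries.X) from (hcomp _).symm, ← map_pow, ← map_mul]
      rw [← hcomp]
      congr 1
      rw [hcdef, hbdef, map_mul, ← mul_assoc]
      congr 1
      rw [← zpow_natCast (φ PowerSeries.X) (n * p), ← zpow_add₀ hφX]
      have he : ((n * p : ℕ) : ℤ) + -(m : ℤ) = 1 := by
        have : n * p = m + 1 := by rw [hn, mul_comm]
        omega
      rw [he, zpow_one]
    have h3 : ψ PowerSeries.X ^ (n * p) * y = ψ a * z := by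
      rw [hadef, map_pow, hzdef, ← mul_assoc, ← pow_add]
      congr 2
      obtain ⟨q, rfl⟩ : ∃ q, p = q + 1 := ⟨p - 1, by omega⟩
      simp [Nat.add_sub_cancel]
      ring
    rw [h1, heq', mul_add, h2, h3]
  have h0 : Polynomial.aeval z E = 0 := by
    rw [hEdef]
    simp only [map_sub, map_mul, aeval_X_pow, aeval_X, aeval_C]
    rw [hzp, hψ]
    ring
  have hzint : IsIntegral (PowerSeries k) z := ⟨E, hEm, h0⟩
  have hKz : IsIntegral (LaurentSeries k) z := hzint.tower_top
  -- z generates L over K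
  have hzgen : Algebra.adjoin (LaurentSeries k) {z} = ⊤ := by
    have h1 : z = ι (φ PowerSeries.X ^ n) * y := by
      rw [hzdef, map_pow, hcomp]
    rw [h1, hι, aux_adjoin_unit_mul (pow_ne_zero n hφX), hgen]
  -- minimal polynomials
  have hminKf : minpoly (LaurentSeries k) z = E.map φ :=
    aux_minpoly_eq hzgen (hEm.map φ)
      (by rw [Polynomial.aeval_map_algebraMap]; exact h0)
      (by rw [hEm.natDegree_map, hEdeg, hdeg])
  have hminR : minpoly (PowerSeries k) z = E := by
    have hh := minpoly.isIntegrallyClosed_eq_field_fractions' (LaurentSeries k) hzint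
    rw [hminKf] at hh
    exact Polynomial.map_injective φ hφinj hh.symm
  -- Eisenstein
  have hEis : E.IsEisensteinAt
      (Ideal.span {(PowerSeries.X : PowerSeries k)}) := by
    rw [hEdef, hadef, hbdef]
    exact aux_eisenstein PowerSeries.X_prime hg hp2 (Nat.mul_pos (by omega) (by omega))
  -- conclusion
  apply le_antisymm ?_ (Algebra.adjoin_le (Set.singleton_subset_iff.2 hzint))
  intro w hw
  replace hw : IsIntegral (PowerSeries k) w := hw
  let PB : PowerBasis (LaurentSeries k) L := (Algebra.adjoin.powerBasis hKz).map
    ((Subalgebra.equivOfEq _ _ hzgen).trans Subalgebra.topEquiv)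
  have hPBgen : PB.gen = z := rfl
  obtain ⟨r, hrM, hmem⟩ := aux_denom
    (Submonoid.powers (PowerSeries.X : PowerSeries k)) PB w
  obtain ⟨N, hN⟩ := hrM
  rw [← hN] at hmem
  have hmain := mem_adjoin_of_smul_prime_pow_smul_of_minpoly_isEisensteinAt
    (K := LaurentSeries k) PowerSeries.X_prime (hPBgen ▸ hzint) hw hmem
    (by rw [hPBgen, hminR]; exact hEis)
  rwa [hPBgen] at hmain
end

section
/- Let K = k((x)), L/K the Artin–Schreier extension given by y^p - y = x^{-m}g(x) with g a unit, gcd(m,p) = 1, and write m = pn - r with 1 < r < p. If c, d are the unique integers with 0 < c < p and c·r - d·p = 1, then u := x^{nc - d} y^c has valuation 1 in L, so the integral closure of k[[x]] in L equals k[[x]][u]. -/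
/-!
Since `w (y ^ p - y) = -m p < 0`, the strict triangle inequality forces `w y = -m`, hence
`w u = (n c - d) p - c m = c r - d p = 1`. On `K = k((x))` the function `w` is `p` times the
`x`-adic order: it kills the units of `k[[x]]`, whose constant parts are `p ^ N`-th powers (`k` is
perfect) and whose `1`-unit parts are `(p + 1) ^ N`-th powers (Hensel), so their values are
divisible by arbitrarily high powers of an integer `≥ 2`. Consequently the terms of
`∑_{i < p} aᵢ uⁱ` (`aᵢ ∈ K`) have values in distinct classes mod `p`, so the `uⁱ` form a
`K`-basis of `L` and `w (∑ aᵢ uⁱ) = minᵢ w (aᵢ uⁱ)`. Thus `w z ≥ 0` puts every `aᵢ` into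
`k[[x]]`; integral elements satisfy `w z ≥ 0`, and `u` is integral because `k[[x]][u]` is spanned
by `1, u, …, u ^ (p - 1)`.
-/

open PowerSeries

theorem PowerSeries.exists_pow_eq_of_constantCoeff_eq_one {R : Type*} [CommRing R] {q : ℕ}
    (hq : IsUnit (q : R)) {h : R⟦X⟧} (hh : constantCoeff h = 1) : ∃ s : R⟦X⟧, s ^ q = h := by
  rcases eq_or_ne q 0 with rfl | hq0
  · have : Subsingleton R⟦X⟧ := by
      have := subsingleton_of_zero_eq_one (isUnit_zero_iff.mp (by simpa using hq))
      infer_instance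
    exact ⟨h, Subsingleton.elim _ _⟩
  have hroot : (Polynomial.X ^ q - Polynomial.C h).eval 1 ∈ Ideal.span {(X : R⟦X⟧)} := by
    rw [Ideal.mem_span_singleton, X_dvd_iff]
    simp [hh]
  have hderiv : IsUnit (Ideal.Quotient.mk (Ideal.span {(X : R⟦X⟧)})
      ((Polynomial.X ^ q - Polynomial.C h).derivative.eval 1)) := by
    refine IsUnit.map _ ?_
    rw [isUnit_iff_constantCoeff]
    simpa [Polynomial.derivative_X_pow] using hq
  obtain ⟨s, hs, -⟩ := HenselianRing.is_henselian _ (Polynomial.monic_X_pow_sub_C h hq0) 1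
    hroot hderiv
  exact ⟨s, by simpa [sub_eq_zero] using hs⟩

structure IsIntValuation {L : Type*} [Field L] (w : L → ℤ) : Prop where
  map_mul : ∀ a b : L, a ≠ 0 → b ≠ 0 → w (a * b) = w a + w b
  min_le_map_add : ∀ a b : L, a ≠ 0 → b ≠ 0 → a + b ≠ 0 → min (w a) (w b) ≤ w (a + b)
  map_add_of_ne : ∀ a b : L, a ≠ 0 → b ≠ 0 → a + b ≠ 0 → w a ≠ w b →
    w (a + b) = min (w a) (w b)

namespace IsIntValuation

variable {L : Type*} [Field L] {w : L → ℤ} (hw : IsIntValuation w)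
include hw

theorem map_one : w 1 = 0 := by
  simpa using hw.map_mul 1 1 one_ne_zero one_ne_zero

theorem map_pow {a : L} (ha : a ≠ 0) (n : ℕ) : w (a ^ n) = n * w a := by
  induction n with
  | zero => simpa using hw.map_one
  | succ n ih =>
    rw [pow_succ, hw.map_mul _ _ (pow_ne_zero _ ha) ha, ih]
    push_cast
    ring

theorem map_neg {a : L} (ha : a ≠ 0) : w (-a) = w a := by
  have h := hw.map_pow (neg_ne_zero.mpr (one_ne_zero (α := L))) 2
  rw [neg_one_sq, hw.map_one] at h
  rw [neg_eq_neg_one_mul, hw.map_mul _ _ (neg_ne_zero.mpr one_ne_zero) ha]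
  push_cast at h
  omega

theorem map_inv {a : L} (ha : a ≠ 0) : w a⁻¹ = -w a := by
  have h := hw.map_mul a a⁻¹ ha (inv_ne_zero ha)
  rw [mul_inv_cancel₀ ha, hw.map_one] at h
  omega

theorem map_zpow {a : L} (ha : a ≠ 0) (n : ℤ) : w (a ^ n) = n * w a := by
  cases n with
  | ofNat n => simpa using hw.map_pow ha n
  | negSucc n =>
    rw [zpow_negSucc, hw.map_inv (pow_ne_zero _ ha), hw.map_pow ha, Int.negSucc_eq]
    push_cast
    ring

theorem le_map_sum {ι : Type*} (s : Finset ι) (f : ι → L) {B : ℤ}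
    (hB : ∀ i ∈ s, f i ≠ 0 → B ≤ w (f i)) (hs : ∑ i ∈ s, f i ≠ 0) :
    B ≤ w (∑ i ∈ s, f i) := by
  induction s using Finset.cons_induction with
  | empty => simp at hs
  | cons a s ha ih =>
    have ih' := fun hs => ih (fun i hi => hB i (Finset.mem_cons_of_mem hi)) hs
    rw [Finset.sum_cons] at hs ⊢
    by_cases hfa : f a = 0
    · rw [hfa, zero_add] at hs ⊢
      exact ih' hs
    by_cases hrest : ∑ i ∈ s, f i = 0
    · rw [hrest, add_zero] at hs ⊢
      exact hB a (Finset.mem_cons_self a s) hfa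
    exact (le_min (hB a (Finset.mem_cons_self a s) hfa) (ih' hrest)).trans
      (hw.min_le_map_add _ _ hfa hrest hs)

theorem sum_ne_zero_and_map_sum_eq_inf' {ι : Type*} {s : Finset ι} (hs : s.Nonempty)
    {f : ι → L} (hf : ∀ i ∈ s, f i ≠ 0) (hinj : Set.InjOn (fun i => w (f i)) s) :
    ∑ i ∈ s, f i ≠ 0 ∧ w (∑ i ∈ s, f i) = s.inf' hs (fun i => w (f i)) := by
  induction hs using Finset.Nonempty.cons_induction with
  | singleton a => simpa using hf a (Finset.mem_singleton_self a)
  | cons a s ha hs ih =>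
    have hfa := hf a (Finset.mem_cons_self a s)
    obtain ⟨hrest, hwrest⟩ := ih (fun i hi => hf i (Finset.mem_cons_of_mem hi))
      (hinj.mono (by simp [Set.subset_insert]))
    obtain ⟨j, hj, hjmin⟩ := s.exists_mem_eq_inf' hs (fun i => w (f i))
    have hne : w (f a) ≠ w (∑ i ∈ s, f i) := by
      rw [hwrest, hjmin]
      intro h
      exact ha (hinj (by simp) (by simp [hj]) h ▸ hj)
    have hsum : f a + ∑ i ∈ s, f i ≠ 0 := fun h0 =>
      hne (by rw [eq_neg_of_add_eq_zero_right h0, hw.map_neg hfa])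
    rw [Finset.sum_cons, Finset.inf'_cons hs, hw.map_add_of_ne _ _ hfa hrest hsum hne, hwrest]
    exact ⟨hsum, rfl⟩

theorem map_pow_sub_self {p : ℕ} (hp : 1 < p) {y : L} (hy : y ≠ 0) (hne : y ^ p - y ≠ 0)
    (hneg : w (y ^ p - y) < 0) : w (y ^ p - y) = p * w y := by
  rw [sub_eq_add_neg] at hne hneg ⊢
  have hyp : y ^ p ≠ 0 := pow_ne_zero p hy
  have hmin := hw.min_le_map_add _ _ hyp (neg_ne_zero.mpr hy) hne
  rw [hw.map_pow hy, hw.map_neg hy] at hmin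
  have hwy : w y < 0 := by
    by_contra! h
    have : (0 : ℤ) ≤ p * w y := by positivity
    omega
  have hlt : (p : ℤ) * w y < w y := by
    have : (1 : ℤ) < p := by exact_mod_cast hp
    nlinarith
  rw [hw.map_add_of_ne _ _ hyp (neg_ne_zero.mpr hy) hne (by
    rw [hw.map_pow hy, hw.map_neg hy]; exact hlt.ne), hw.map_pow hy, hw.map_neg hy,
    min_eq_left hlt.le]

theorem map_eq_zero_of_forall_exists_pow_eq {q : ℕ} (hq : 2 ≤ q) {a : L} (ha : a ≠ 0)
    (hroot : ∀ N : ℕ, ∃ b : L, b ^ q ^ N = a) : w a = 0 := by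
  by_contra h
  obtain ⟨N, hN⟩ := (Int.finiteMultiplicity_iff (a := q)).mpr ⟨by simp; omega, h⟩
  obtain ⟨b, rfl⟩ := hroot (N + 1)
  have hb : b ≠ 0 := by rintro rfl; exact ha (zero_pow (by positivity))
  exact hN ⟨w b, by rw [hw.map_pow hb]; push_cast; rfl⟩

theorem map_nonneg_of_isIntegral {A : Type*} [CommRing A] [Algebra A L]
    (hA : ∀ b : A, b ≠ 0 → 0 ≤ w (algebraMap A L b)) {z : L} (hz : IsIntegral A z)
    (hz0 : z ≠ 0) : 0 ≤ w z := by
  obtain ⟨P, hmonic, heval⟩ := hz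
  set N := P.natDegree
  have hsum : z ^ N = -∑ i ∈ Finset.range N, algebraMap A L (P.coeff i) * z ^ i := by
    rw [← Polynomial.aeval_def, hmonic.as_sum] at heval
    simpa [eq_neg_iff_add_eq_zero] using heval
  have hsum0 : ∑ i ∈ Finset.range N, algebraMap A L (P.coeff i) * z ^ i ≠ 0 := fun h0 =>
    pow_ne_zero N hz0 (by rw [hsum, h0, neg_zero])
  by_contra! hneg
  -- every lower term of the integral equation has value `≥ (N - 1) w z > N w z = w (z ^ N)`
  have hle := hw.le_map_sum _ _ (B := (N - 1) * w z) (fun i hi hne => by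
    have hc : P.coeff i ≠ 0 := fun h => hne (by simp [h])
    have hi : (i : ℤ) ≤ N - 1 := by have := Finset.mem_range.mp hi; omega
    rw [hw.map_mul _ _ (left_ne_zero_of_mul hne) (pow_ne_zero i hz0), hw.map_pow hz0]
    nlinarith [hA _ hc]) hsum0
  rw [← hw.map_neg hsum0, ← hsum, hw.map_pow hz0] at hle
  linarith

section DiscreteValuationRing

variable {A K : Type*} [CommRing A] [IsDomain A] [IsDiscreteValuationRing A]
  [Algebra A L] (hunit : ∀ v : Aˣ, w (algebraMap A L v) = 0) {ϖ : A} (hϖ : Irreducible ϖ)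
include hunit hϖ

theorem map_algebraMap_nonneg (hinj : Function.Injective (algebraMap A L))
    (hϖ0 : 0 ≤ w (algebraMap A L ϖ)) {b : A} (hb : b ≠ 0) : 0 ≤ w (algebraMap A L b) := by
  obtain ⟨n, v, rfl⟩ := IsDiscreteValuationRing.eq_unit_mul_pow_irreducible hb hϖ
  have hϖL : algebraMap A L ϖ ≠ 0 := (map_ne_zero_iff _ hinj).mpr hϖ.ne_zero
  rw [_root_.map_mul, _root_.map_pow,
    hw.map_mul _ _ (v.isUnit.map _).ne_zero (pow_ne_zero _ hϖL), hunit, hw.map_pow hϖL, zero_add]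
  positivity

theorem exists_map_algebraMap_eq_mul_and_mem_range [Field K] [Algebra A K]
    [IsFractionRing A K] [Algebra K L] [IsScalarTower A K L] {a : K} (ha : a ≠ 0) :
    ∃ n : ℤ, w (algebraMap K L a) = n * w (algebraMap A L ϖ) ∧
      (0 ≤ n → a ∈ (algebraMap A K).range) := by
  obtain ⟨n, v, rfl⟩ := IsDiscreteValuationRing.exists_units_eq_smul_zpow_of_irreducible hϖ ha
  have hϖK : algebraMap A K ϖ ≠ 0 := by simpa using hϖ.ne_zero
  have hϖL : algebraMap A L ϖ ≠ 0 := by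
    rw [IsScalarTower.algebraMap_apply A K L]
    exact (map_ne_zero _).mpr hϖK
  refine ⟨n, ?_, fun hn => ?_⟩
  · rw [Units.smul_def, Algebra.smul_def, _root_.map_mul, map_zpow₀,
      ← IsScalarTower.algebraMap_apply, ← IsScalarTower.algebraMap_apply,
      hw.map_mul _ _ (v.isUnit.map _).ne_zero (zpow_ne_zero _ hϖL), hunit, hw.map_zpow hϖL,
      zero_add]
  · lift n to ℕ using hn
    exact ⟨v * ϖ ^ n, by simp [Units.smul_def, Algebra.smul_def]⟩

end DiscreteValuationRing

theorem map_algebraMap_powerSeries_unit {p : ℕ} [Fact p.Prime] {k : Type*} [Field k]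
    [CharP k p] [PerfectRing k p] [Algebra k⟦X⟧ L] (v : k⟦X⟧ˣ) :
    w (algebraMap k⟦X⟧ L v) = 0 := by
  have hp : p.Prime := Fact.out
  set a := constantCoeff (v : k⟦X⟧)
  have ha : a ≠ 0 := (isUnit_constantCoeff _ v.isUnit).ne_zero
  set h := C a⁻¹ * (v : k⟦X⟧)
  have hh : constantCoeff h = 1 := by simp [h, a, ha]
  have hv : (v : k⟦X⟧) = C a * h := by
    rw [← mul_assoc, ← _root_.map_mul, mul_inv_cancel₀ ha, _root_.map_one, one_mul]
  have hCa : IsUnit (algebraMap k⟦X⟧ L (C a)) := (ha.isUnit.map C).map _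
  have hhL : IsUnit (algebraMap k⟦X⟧ L h) := (isUnit_of_mul_isUnit_right (hv ▸ v.isUnit)).map _
  have hwC : w (algebraMap k⟦X⟧ L (C a)) = 0 := by
    refine hw.map_eq_zero_of_forall_exists_pow_eq hp.two_le hCa.ne_zero fun N => ?_
    obtain ⟨b, hb⟩ := (bijective_iterateFrobenius k p N).2 a
    exact ⟨algebraMap k⟦X⟧ L (C b), by rw [← _root_.map_pow, ← _root_.map_pow, ← hb,
      iterateFrobenius_def]⟩
  have hwh : w (algebraMap k⟦X⟧ L h) = 0 := by
    refine hw.map_eq_zero_of_forall_exists_pow_eq (q := p + 1) (by linarith [hp.two_le])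
      hhL.ne_zero fun N => ?_
    obtain ⟨s, hs⟩ := exists_pow_eq_of_constantCoeff_eq_one (q := (p + 1) ^ N) (by simp) hh
    exact ⟨algebraMap k⟦X⟧ L s, by rw [← _root_.map_pow, hs]⟩
  rw [hv, _root_.map_mul, hw.map_mul _ _ hCa.ne_zero hhL.ne_zero, hwC, hwh, add_zero]

section TotallyRamified

-- `L / K` is totally ramified of degree `e`, `A` is the valuation ring of `K`, and `u` is a
-- uniformizer of `L`.
variable {A K : Type*} [CommRing A] [Field K] [Algebra A K] [Algebra K L] {e : ℕ}
  (hK : ∀ a : K, a ≠ 0 → ∃ n : ℤ, w (algebraMap K L a) = n * e ∧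
    (0 ≤ n → a ∈ (algebraMap A K).range))
  {u : L} (hu0 : u ≠ 0) (hu : w u = 1)
include hK hu0 hu

theorem exists_map_smul_pow_eq {a : K} (ha : a ≠ 0) (i : ℕ) :
    ∃ n : ℤ, w (a • u ^ i) = n * e + i ∧ (0 ≤ n → a ∈ (algebraMap A K).range) := by
  obtain ⟨n, hn, hrange⟩ := hK a ha
  refine ⟨n, ?_, hrange⟩
  rw [Algebra.smul_def, hw.map_mul _ _ ((map_ne_zero _).mpr ha) (pow_ne_zero i hu0), hn,
    hw.map_pow hu0, hu, mul_one]

theorem sum_smul_pow_ne_zero_and_map_le (g : Fin e → K) {i : Fin e} (hi : g i ≠ 0) :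
    ∑ j, g j • u ^ (j : ℕ) ≠ 0 ∧ w (∑ j, g j • u ^ (j : ℕ)) ≤ w (g i • u ^ (i : ℕ)) := by
  classical
  set s := Finset.univ.filter fun j : Fin e => g j • u ^ (j : ℕ) ≠ 0
  have his : i ∈ s := by simp [s, hi, hu0]
  have hinj : Set.InjOn (fun j => w (g j • u ^ (j : ℕ))) s := by
    intro j hj j' hj' hjj'
    have hgj : g j ≠ 0 := fun h => (Finset.mem_filter.mp hj).2 (by simp [h])
    have hgj' : g j' ≠ 0 := fun h => (Finset.mem_filter.mp hj').2 (by simp [h])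
    obtain ⟨n, hn, -⟩ := hw.exists_map_smul_pow_eq hK hu0 hu hgj j
    obtain ⟨n', hn', -⟩ := hw.exists_map_smul_pow_eq hK hu0 hu hgj' j'
    simp only [hn, hn'] at hjj'
    have hdvd : (e : ℤ) ∣ (j : ℤ) - j' := ⟨n' - n, by linarith⟩
    have := Int.eq_zero_of_abs_lt_dvd hdvd (by rw [abs_sub_lt_iff]; omega)
    exact Fin.ext (by omega)
  obtain ⟨hne, heq⟩ := hw.sum_ne_zero_and_map_sum_eq_inf' ⟨i, his⟩
    (fun j hj => (Finset.mem_filter.mp hj).2) hinj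
  rw [Finset.sum_filter_ne_zero] at hne heq
  exact ⟨hne, heq ▸ Finset.inf'_le _ his⟩

theorem linearIndependent_pow : LinearIndependent K fun i : Fin e => u ^ (i : ℕ) := by
  rw [Fintype.linearIndependent_iff]
  intro g hg i
  by_contra hi
  exact (hw.sum_smul_pow_ne_zero_and_map_le hK hu0 hu g hi).1 hg

theorem mem_span_pow_of_map_nonneg [Algebra A L] [IsScalarTower A K L] [FiniteDimensional K L]
    (hdeg : Module.finrank K L = e) {z : L} (hz : 0 ≤ w z) :
    z ∈ Submodule.span A (Set.range fun i : Fin e => u ^ (i : ℕ)) := by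
  let B := basisOfLinearIndependentOfCardEqFinrank' _ (hw.linearIndependent_pow hK hu0 hu)
    (by rw [Fintype.card_fin, hdeg])
  have hz_eq : ∑ i, B.repr z i • u ^ (i : ℕ) = z := by simpa [B] using B.sum_repr z
  rw [← hz_eq]
  refine Submodule.sum_mem _ fun i _ => ?_
  by_cases hi : B.repr z i = 0
  · simp [hi]
  have hle := (hw.sum_smul_pow_ne_zero_and_map_le hK hu0 hu (B.repr z) hi).2
  obtain ⟨n, hn, hrange⟩ := hw.exists_map_smul_pow_eq hK hu0 hu hi i
  rw [hz_eq, hn] at hle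
  obtain ⟨b, hb⟩ := hrange (by have := i.isLt; nlinarith)
  rw [← hb, algebraMap_smul]
  exact Submodule.smul_mem _ _ (Submodule.subset_span ⟨i, rfl⟩)

theorem integralClosure_eq_adjoin [Algebra A L] [IsScalarTower A K L] [FiniteDimensional K L]
    (hdeg : Module.finrank K L = e) (hA : ∀ b : A, b ≠ 0 → 0 ≤ w (algebraMap A L b)) :
    integralClosure A L = Algebra.adjoin A {u} := by
  set M := Submodule.span A (Set.range fun i : Fin e => u ^ (i : ℕ))
  have hmem : ∀ {z : L}, 0 ≤ w z → z ∈ M := hw.mem_span_pow_of_map_nonneg hK hu0 hu hdeg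
  have hadjoin : Subalgebra.toSubmodule (Algebra.adjoin A {u}) = M := by
    refine le_antisymm ?_ ?_
    · rw [Algebra.adjoin_eq_span, Submodule.span_le]
      intro _ hx
      obtain ⟨N, rfl⟩ := Submonoid.mem_closure_singleton.mp hx
      exact hmem (by rw [hw.map_pow hu0, hu]; positivity)
    · rw [Submodule.span_le]
      rintro _ ⟨i, rfl⟩
      exact pow_mem (Algebra.self_mem_adjoin_singleton A u) _
  have hu_int : IsIntegral A u := .of_mem_of_fg _
    (hadjoin ▸ Submodule.fg_span (Set.finite_range _)) u (Algebra.self_mem_adjoin_singleton A u)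
  refine le_antisymm (fun z hz => ?_) (Algebra.adjoin_le (Set.singleton_subset_iff.mpr hu_int))
  rcases eq_or_ne z 0 with rfl | hz0
  · exact zero_mem _
  rw [← Subalgebra.mem_toSubmodule, hadjoin]
  exact hmem (hw.map_nonneg_of_isIntegral hA hz hz0)

end TotallyRamified

end IsIntValuation

theorem stmt_3_general {p m n r : ℕ} (c d : ℤ) (hp : p.Prime) (hm : 0 < m)
    (hmnr : (m : ℤ) = p * n - r)
    (hcd : c * r - d * p = 1)
    {k : Type*} [Field k] [PerfectField k] [CharP k p]
    {L : Type*} [Field L] [Algebra (LaurentSeries k) L]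
    [Algebra (PowerSeries k) L]
    [IsScalarTower (PowerSeries k) (LaurentSeries k) L]
    [FiniteDimensional (LaurentSeries k) L]
    (hdeg : Module.finrank (LaurentSeries k) L = p)
    (w : L → ℤ)
    (hmul : ∀ a b : L, a ≠ 0 → b ≠ 0 → w (a * b) = w a + w b)
    (hadd : ∀ a b : L, a ≠ 0 → b ≠ 0 → a + b ≠ 0 → min (w a) (w b) ≤ w (a + b))
    (hadd' : ∀ a b : L, a ≠ 0 → b ≠ 0 → a + b ≠ 0 → w a ≠ w b →
      w (a + b) = min (w a) (w b))
    (hwx : w (algebraMap (PowerSeries k) L PowerSeries.X) = (p : ℤ))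
    (g : PowerSeries k) (hg : IsUnit g)
    (y : L) (hy : y ≠ 0)
    (heq : y ^ p - y =
      algebraMap (LaurentSeries k) L
        ((algebraMap (PowerSeries k) (LaurentSeries k) PowerSeries.X) ^ (-(m : ℤ)) *
          algebraMap (PowerSeries k) (LaurentSeries k) g)) :
    w ((algebraMap (PowerSeries k) L PowerSeries.X) ^ ((n : ℤ) * c - d) * y ^ c) = 1 ∧
      integralClosure (PowerSeries k) L =
        Algebra.adjoin (PowerSeries k)
          {(algebraMap (PowerSeries k) L PowerSeries.X) ^ ((n : ℤ) * c - d) * y ^ c} := by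
  have hw : IsIntValuation w := ⟨hmul, hadd, hadd'⟩
  have : Fact p.Prime := ⟨hp⟩
  have hunit := hw.map_algebraMap_powerSeries_unit (p := p) (k := k) (L := L)
  have hinj : Function.Injective (algebraMap (PowerSeries k) L) := by
    rw [IsScalarTower.algebraMap_eq (PowerSeries k) (LaurentSeries k) L]
    exact (algebraMap (LaurentSeries k) L).injective.comp (IsFractionRing.injective _ _)
  set x := algebraMap (PowerSeries k) L X
  have hx : x ≠ 0 := (map_ne_zero_iff _ hinj).mpr X_ne_zero
  have hrhs : y ^ p - y = x ^ (-(m : ℤ)) * algebraMap (PowerSeries k) L g := by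
    rw [heq, map_mul, map_zpow₀, ← IsScalarTower.algebraMap_apply,
      ← IsScalarTower.algebraMap_apply]
  have hgL : algebraMap (PowerSeries k) L g ≠ 0 := (hg.map _).ne_zero
  have hwrhs : w (y ^ p - y) = -m * p := by
    rw [hrhs, hw.map_mul _ _ (zpow_ne_zero _ hx) hgL, hw.map_zpow hx, hwx, ← hg.unit_spec,
      hunit, add_zero]
  have hp0 : (0 : ℤ) < p := by exact_mod_cast hp.pos
  have hwy : w y = -m := by
    have h := hw.map_pow_sub_self hp.one_lt hy (hrhs ▸ mul_ne_zero (zpow_ne_zero _ hx) hgL)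
      (by rw [hwrhs]; nlinarith [(show (0 : ℤ) < m by exact_mod_cast hm)])
    rw [hwrhs] at h
    nlinarith
  have hu0 : x ^ ((n : ℤ) * c - d) * y ^ c ≠ 0 :=
    mul_ne_zero (zpow_ne_zero _ hx) (zpow_ne_zero _ hy)
  have hwu : w (x ^ ((n : ℤ) * c - d) * y ^ c) = 1 := by
    rw [hw.map_mul _ _ (zpow_ne_zero _ hx) (zpow_ne_zero _ hy), hw.map_zpow hx, hw.map_zpow hy,
      hwx, hwy]
    linear_combination (-c : ℤ) * hmnr + hcd
  refine ⟨hwu, hw.integralClosure_eq_adjoin (fun a ha => ?_) hu0 hwu hdeg fun b hb => ?_⟩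
  · obtain ⟨n, hn, hrange⟩ :=
      hw.exists_map_algebraMap_eq_mul_and_mem_range hunit X_irreducible ha
    exact ⟨n, hwx ▸ hn, hrange⟩
  · exact hw.map_algebraMap_nonneg hunit X_irreducible hinj (by rw [hwx]; positivity) hb

/-- K = k((x)), L/K the Artin–Schreier extension y^p - y = x^{-m} g(x),
g ∈ k[[x]]^×, gcd(m,p)=1, m = pn - r with 1 < r < p, and c,d integers with
0 < c < p and c r - d p = 1. Then u := x^{nc-d} y^c has valuation 1 in L (where w
is the extension of the x-adic valuation with w x = p), and hence the integral
closure of k[[x]] in L equals k[[x]][u]. -/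
theorem stmt_3 {p m n r : ℕ} (c d : ℤ) (hp : p.Prime) (hm : 0 < m)
    (hcop : Nat.Coprime m p) (hr1 : 1 < r) (hrp : r < p)
    (hmnr : (m : ℤ) = p * n - r)
    (hc0 : 0 < c) (hcp : c < p) (hcd : c * r - d * p = 1)
    {k : Type*} [Field k] [PerfectField k] [CharP k p]
    {L : Type*} [Field L] [Algebra (LaurentSeries k) L]
    [Algebra (PowerSeries k) L]
    [IsScalarTower (PowerSeries k) (LaurentSeries k) L]
    [FiniteDimensional (LaurentSeries k) L]
    (hdeg : Module.finrank (LaurentSeries k) L = p)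
    (w : L → ℤ)
    (hmul : ∀ a b : L, a ≠ 0 → b ≠ 0 → w (a * b) = w a + w b)
    (hadd : ∀ a b : L, a ≠ 0 → b ≠ 0 → a + b ≠ 0 → min (w a) (w b) ≤ w (a + b))
    (hadd' : ∀ a b : L, a ≠ 0 → b ≠ 0 → a + b ≠ 0 → w a ≠ w b →
      w (a + b) = min (w a) (w b))
    (hwx : w (algebraMap (PowerSeries k) L PowerSeries.X) = (p : ℤ))
    (g : PowerSeries k) (hg : IsUnit g)
    (y : L) (hy : y ≠ 0)
    (heq : y ^ p - y =
      algebraMap (LaurentSeries k) L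
        ((algebraMap (PowerSeries k) (LaurentSeries k) PowerSeries.X) ^ (-(m : ℤ)) *
          algebraMap (PowerSeries k) (LaurentSeries k) g))
    (hgen : Algebra.adjoin (LaurentSeries k) {y} = ⊤) :
    w ((algebraMap (PowerSeries k) L PowerSeries.X) ^ ((n : ℤ) * c - d) * y ^ c) = 1 ∧
      integralClosure (PowerSeries k) L =
        Algebra.adjoin (PowerSeries k)
          {(algebraMap (PowerSeries k) L PowerSeries.X) ^ ((n : ℤ) * c - d) * y ^ c} :=
  stmt_3_general c d hp hm hmnr hcd hdeg w hmul hadd hadd' hwx g hg y hy heq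
end
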